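/- Let X be a random variable taking values in [−V, V] such that E[exp(−ηX)] ≤ 1 for some η > 0. Then E[X²] ≤ 4(η⁻¹ + V)·E[X]. -/

import Mathlib

/-!
Pointwise, `e^{-z} ≥ 1 - z + z² / (4(1 + a))` whenever `z ≤ a` and `a ≥ 0`. Applied to `z = ηX`,
`a = ηV` and integrated, the hypothesis `E[e^{-ηX}] ≤ 1` leaves
`η² E[X²] / (4(1 + ηV)) ≤ η E[X]`, which is the claim after dividing by `η² / (4(1 + ηV))`.
-/

open MeasureTheory

namespace Real

lemma sq_div_two_le_one_add_mul_exp_neg_sub_one_add {z : ℝ} (hz : 0 ≤ z) :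
    z ^ 2 / 2 ≤ (1 + z) * (exp (-z) - 1 + z) := by
  set h : ℝ → ℝ := fun t ↦ (1 + t) * (exp (-t) - 1 + t) - t ^ 2 / 2
  have hderiv (t : ℝ) : HasDerivAt h (t * (1 - exp (-t))) t := by
    have hexp : HasDerivAt (fun t ↦ exp (-t)) (-exp (-t)) t := by
      simpa using (hasDerivAt_neg t).exp
    have := (((hasDerivAt_id' t).const_add 1).mul ((hexp.sub_const 1).add (hasDerivAt_id' t))).sub
      ((hasDerivAt_pow 2 t).div_const 2)
    exact this.congr_deriv (by simp only [Pi.add_apply]; ring)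
  have hderiv_nonneg (t : ℝ) : 0 ≤ t * (1 - exp (-t)) := by
    rcases le_total 0 t with ht | ht
    · exact mul_nonneg ht (sub_nonneg.2 (exp_le_one_iff.2 (neg_nonpos.2 ht)))
    · exact mul_nonneg_of_nonpos_of_nonpos ht (sub_nonpos.2 (one_le_exp (neg_nonneg.2 ht)))
  have := monotone_of_hasDerivAt_nonneg hderiv hderiv_nonneg hz
  simp only [h, neg_zero, exp_zero] at this
  linarith

lemma one_sub_add_sq_div_le_exp_neg {a z : ℝ} (ha : 0 ≤ a) (hza : z ≤ a) :
    1 - z + z ^ 2 / (4 * (1 + a)) ≤ exp (-z) := by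
  have hsq_div : z ^ 2 / (4 * (1 + a)) ≤ z ^ 2 / 2 :=
    div_le_div_of_nonneg_left (sq_nonneg z) two_pos (by linarith)
  rcases le_total z 0 with hz | hz
  · have := quadratic_le_exp_of_nonneg (neg_nonneg.2 hz)
    rw [neg_sq] at this
    linarith
  · have key := sq_div_two_le_one_add_mul_exp_neg_sub_one_add hz
    have hlin : 0 ≤ exp (-z) - 1 + z := by linarith [add_one_le_exp (-z)]
    have : z ^ 2 / (4 * (1 + a)) ≤ exp (-z) - 1 + z := by
      rw [div_le_iff₀ (by positivity)]
      nlinarith [mul_nonneg hlin (by linarith : (0 : ℝ) ≤ 1 + 2 * a - z)]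
    linarith

end Real

lemma mul_integral_sq_le_of_le_exp_neg {Ω : Type*} [MeasurableSpace Ω] {μ : Measure Ω}
    [IsProbabilityMeasure μ] {X : Ω → ℝ} {c η : ℝ} (hXi : Integrable X μ)
    (hX2i : Integrable (fun ω ↦ X ω ^ 2) μ) (hexpi : Integrable (fun ω ↦ Real.exp (-η * X ω)) μ)
    (hpointwise : ∀ ω, 1 - η * X ω + c * X ω ^ 2 ≤ Real.exp (-η * X ω))
    (hmgf : ∫ ω, Real.exp (-η * X ω) ∂μ ≤ 1) :
    c * ∫ ω, X ω ^ 2 ∂μ ≤ η * ∫ ω, X ω ∂μ := by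
  have hlinear_int : Integrable (fun ω ↦ 1 - η * X ω) μ :=
    (integrable_const 1).sub (hXi.const_mul η)
  have hlower : ∫ ω, (1 - η * X ω + c * X ω ^ 2) ∂μ
      = 1 - η * ∫ ω, X ω ∂μ + c * ∫ ω, X ω ^ 2 ∂μ := by
    rw [integral_add hlinear_int (hX2i.const_mul c),
      integral_sub (integrable_const 1) (hXi.const_mul η), integral_const_mul, integral_const_mul,
      integral_const, probReal_univ, one_smul]
  linarith [integral_mono (f := fun ω ↦ 1 - η * X ω + c * X ω ^ 2)
    (hlinear_int.add (hX2i.const_mul c)) hexpi hpointwise]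

theorem central_to_bernstein {Ω : Type*} [MeasurableSpace Ω] (μ : Measure Ω)
    [IsProbabilityMeasure μ] (X : Ω → ℝ) (hX : Measurable X) (V η : ℝ)
    (hη : 0 < η) (hb : ∀ ω, X ω ∈ Set.Icc (-V) V)
    (hmgf : (∫ ω, Real.exp (-η * X ω) ∂μ) ≤ 1) :
    (∫ ω, X ω ^ 2 ∂μ) ≤ 4 * (η⁻¹ + V) * ∫ ω, X ω ∂μ := by
  obtain ⟨ω₀⟩ := nonempty_of_isProbabilityMeasure μ
  have hV : 0 ≤ V := by linarith [(hb ω₀).1, (hb ω₀).2]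
  set c := η ^ 2 / (4 * (1 + η * V))
  have hpointwise (ω : Ω) : 1 - η * X ω + c * X ω ^ 2 ≤ Real.exp (-η * X ω) := by
    have := Real.one_sub_add_sq_div_le_exp_neg (by positivity)
      (mul_le_mul_of_nonneg_left (hb ω).2 hη.le)
    rw [mul_pow, ← neg_mul] at this
    convert this using 2
    ring
  have hbound (ω : Ω) : ‖X ω‖ ≤ V := abs_le.2 (hb ω)
  have hXi : Integrable X μ := .of_bound hX.aestronglyMeasurable V (.of_forall hbound)
  have hX2i : Integrable (fun ω ↦ X ω ^ 2) μ :=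
    .of_bound (hX.pow_const 2).aestronglyMeasurable (V ^ 2) (.of_forall fun ω ↦ by
      simpa only [norm_pow] using pow_le_pow_left₀ (norm_nonneg _) (hbound ω) 2)
  have hexpi : Integrable (fun ω ↦ Real.exp (-η * X ω)) μ :=
    .of_bound (hX.const_mul (-η)).exp.aestronglyMeasurable (Real.exp (η * V))
      (.of_forall fun ω ↦ by
        rw [Real.norm_eq_abs, Real.abs_exp, Real.exp_le_exp]
        nlinarith [(hb ω).1])
  have hc : 4 * (η⁻¹ + V) * c = η := by
    simp only [c]; field_simp
  refine le_of_mul_le_mul_left ?_ hη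
  calc η * ∫ ω, X ω ^ 2 ∂μ = 4 * (η⁻¹ + V) * (c * ∫ ω, X ω ^ 2 ∂μ) := by
        rw [← mul_assoc, hc]
    _ ≤ 4 * (η⁻¹ + V) * (η * ∫ ω, X ω ∂μ) := mul_le_mul_of_nonneg_left
        (mul_integral_sq_le_of_le_exp_neg hXi hX2i hexpi hpointwise hmgf) (by positivity)
    _ = η * (4 * (η⁻¹ + V) * ∫ ω, X ω ∂μ) := by ring
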